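/- arXiv:2004.02552 — 2 statements merged into one kernel-verified Lean document; each statement's English description precedes it below -/
import Mathlib

section
/- Let β, γ, μ > 0, P ∈ (0,1), set H := (γ+μ)/β, and let B ≥ 0 be a constant with B(1−P) < μH. Let S, I, R, A : [0,∞) → [0,∞) be differentiable nonnegative functions satisfying the SIR model with newborn vaccination: S' = B(1−P) − μS − βIS, I' = βIS − γI − μI, R' = γI − μR, A' = BP − μA for all t ≥ 0. Then lim_{t→∞} (S(t), I(t), R(t), A(t)) = (B(1−P)/μ, 0, 0, BP/μ). -/
/-!
The total `S + I` obeys `(S + I)' ≤ B(1 - P) - μ (S + I)`, so eventually `S < s` for a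
fixed `s` strictly between `B(1 - P)/μ` and `H`. Below `H` the infection decays
exponentially: `I' ≤ -(γ + μ - β s) I`, hence `I → 0`. Each of `S`, `R`, `A` then solves
`f' = g - μ f` with a forcing term `g` converging to `B(1 - P)`, `0` and `BP` respectively,
so `f → lim g / μ`.
-/

open Filter Real Topology

lemma sub_le_mul_exp_of_hasDerivAt_le {f d : ℝ → ℝ} {μ K a : ℝ}
    (hf : ∀ t ≥ a, HasDerivAt f (d t) t) (hd : ∀ t ≥ a, d t ≤ μ * (K - f t)) :
    ∀ t ≥ a, f t - K ≤ (f a - K) * exp (-(μ * (t - a))) := by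
  set g : ℝ → ℝ := fun t => (f t - K) * exp (μ * (t - a))
  have hg : ∀ t ≥ a, HasDerivAt g ((d t - μ * (K - f t)) * exp (μ * (t - a))) t := by
    intro t ht
    have hexp : HasDerivAt (fun t => exp (μ * (t - a))) (exp (μ * (t - a)) * μ) t := by
      simpa using (((hasDerivAt_id t).sub_const a).const_mul μ).exp
    exact (((hf t ht).sub_const K).mul hexp).congr_deriv (by ring)
  have hanti : AntitoneOn g (Set.Ici a) := by
    refine antitoneOn_of_hasDerivWithinAt_nonpos (convex_Ici a)
      (f' := fun t => (d t - μ * (K - f t)) * exp (μ * (t - a)))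
      (fun t ht => (hg t ht).continuousAt.continuousWithinAt) (fun t ht => ?_) (fun t ht => ?_)
    all_goals rw [interior_Ici] at ht
    · exact (hg t (le_of_lt ht)).hasDerivWithinAt
    · exact mul_nonpos_of_nonpos_of_nonneg (by linarith [hd t (le_of_lt ht)]) (exp_pos _).le
  intro t ht
  have hgt : g t ≤ f a - K := by simpa [g] using hanti Set.self_mem_Ici ht ht
  calc f t - K = g t * exp (-(μ * (t - a))) := by simp [g, mul_assoc, ← exp_add]
    _ ≤ (f a - K) * exp (-(μ * (t - a))) := by gcongr

lemma eventually_lt_of_hasDerivAt_le {f d : ℝ → ℝ} {μ K b : ℝ} (hμ : 0 < μ)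
    (hf : ∀ᶠ t in atTop, HasDerivAt f (d t) t) (hd : ∀ᶠ t in atTop, d t ≤ μ * (K - f t))
    (hKb : K < b) : ∀ᶠ t in atTop, f t < b := by
  obtain ⟨a, ha⟩ := eventually_atTop.mp (hf.and hd)
  have hbound := sub_le_mul_exp_of_hasDerivAt_le (fun t ht => (ha t ht).1) fun t ht => (ha t ht).2
  have hdecay : Tendsto (fun t => exp (-(μ * (t - a)))) atTop (𝓝 0) :=
    tendsto_exp_neg_atTop_nhds_zero.comp <|
      (tendsto_atTop_add_const_right _ (-a) tendsto_id).const_mul_atTop hμ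
  have hlim : Tendsto (fun t => K + (f a - K) * exp (-(μ * (t - a)))) atTop (𝓝 K) := by
    simpa using (hdecay.const_mul (f a - K)).const_add K
  filter_upwards [hlim.eventually (gt_mem_nhds hKb), eventually_ge_atTop a] with t hlt ht
  linarith [hbound t ht]

lemma eventually_gt_of_hasDerivAt_ge {f d : ℝ → ℝ} {μ K b : ℝ} (hμ : 0 < μ)
    (hf : ∀ᶠ t in atTop, HasDerivAt f (d t) t) (hd : ∀ᶠ t in atTop, μ * (K - f t) ≤ d t)
    (hbK : b < K) : ∀ᶠ t in atTop, b < f t := by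
  have hneg := eventually_lt_of_hasDerivAt_le (f := fun t => -f t) (d := fun t => -d t)
    (K := -K) hμ (hf.mono fun t h => h.neg) (hd.mono fun t h => by linarith) (neg_lt_neg hbK)
  exact hneg.mono fun t h => by linarith

lemma tendsto_of_hasDerivAt_sub_mul {f g : ℝ → ℝ} {μ L : ℝ} (hμ : 0 < μ)
    (hf : ∀ᶠ t in atTop, HasDerivAt f (g t - μ * f t) t) (hg : Tendsto g atTop (𝓝 L)) :
    Tendsto f atTop (𝓝 (L / μ)) := by
  refine tendsto_order.2 ⟨fun b hb => ?_, fun b hb => ?_⟩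
  · obtain ⟨K, hbK, hKL⟩ := exists_between hb
    have hgK : ∀ᶠ t in atTop, μ * K < g t :=
      hg.eventually (lt_mem_nhds (by rwa [lt_div_iff₀' hμ] at hKL))
    exact eventually_gt_of_hasDerivAt_ge hμ hf (hgK.mono fun t h => by linarith) hbK
  · obtain ⟨K, hLK, hKb⟩ := exists_between hb
    have hgK : ∀ᶠ t in atTop, g t < μ * K :=
      hg.eventually (gt_mem_nhds (by rwa [div_lt_iff₀' hμ] at hLK))
    exact eventually_lt_of_hasDerivAt_le hμ hf (hgK.mono fun t h => by linarith) hKb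

lemma tendsto_zero_of_nonneg_of_hasDerivAt_le {f d : ℝ → ℝ} {η : ℝ} (hη : 0 < η)
    (hf₀ : ∀ᶠ t in atTop, 0 ≤ f t) (hf : ∀ᶠ t in atTop, HasDerivAt f (d t) t)
    (hd : ∀ᶠ t in atTop, d t ≤ -(η * f t)) : Tendsto f atTop (𝓝 0) :=
  tendsto_order.2 ⟨fun _ hb => hf₀.mono fun _ h => hb.trans_le h,
    fun _ hb => eventually_lt_of_hasDerivAt_le hη hf (hd.mono fun _ h => by linarith) hb⟩

theorem sir_newborn_vaccination_convergence_general
    (β γ μ B P : ℝ) (hβ : 0 < β) (hγ : 0 < γ) (hμ : 0 < μ)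
    (hB_small : B * (1 - P) < μ * ((γ + μ) / β))
    (S I R A : ℝ → ℝ)
    (hS_nonneg : ∀ t ≥ (0:ℝ), 0 ≤ S t)
    (hI_nonneg : ∀ t ≥ (0:ℝ), 0 ≤ I t)
    (hS : ∀ t ≥ (0:ℝ),
      HasDerivAt S (B * (1 - P) - μ * S t - β * I t * S t) t)
    (hI : ∀ t ≥ (0:ℝ), HasDerivAt I (β * I t * S t - γ * I t - μ * I t) t)
    (hR : ∀ t ≥ (0:ℝ), HasDerivAt R (γ * I t - μ * R t) t)
    (hA : ∀ t ≥ (0:ℝ), HasDerivAt A (B * P - μ * A t) t) :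
    Filter.Tendsto (fun t => (S t, I t, R t, A t)) Filter.atTop
      (nhds (B * (1 - P) / μ, 0, 0, B * P / μ)) := by
  have hpos := eventually_ge_atTop (0:ℝ)
  obtain ⟨s, hs_gt, hs_lt⟩ : ∃ s, B * (1 - P) / μ < s ∧ β * s < γ + μ := by
    obtain ⟨s, h₁, h₂⟩ := exists_between ((div_lt_iff₀' hμ).2 hB_small)
    exact ⟨s, h₁, (lt_div_iff₀' hβ).1 h₂⟩
  have hS_lt : ∀ᶠ t in atTop, S t < s := by
    have hSI := eventually_lt_of_hasDerivAt_le (f := fun t => S t + I t) hμ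
      (hpos.mono fun t ht => (hS t ht).add (hI t ht))
      (hpos.mono fun t ht => by
        rw [mul_sub μ, mul_div_cancel₀ _ hμ.ne']
        linarith [mul_nonneg hγ.le (hI_nonneg t ht)]) hs_gt
    filter_upwards [hSI, hpos] with t h ht
    linarith [hI_nonneg t ht]
  have hIS_le : ∀ᶠ t in atTop, β * I t * S t ≤ β * s * I t := by
    filter_upwards [hS_lt, hpos] with t h ht
    linarith [mul_le_mul_of_nonneg_left h.le (mul_nonneg hβ.le (hI_nonneg t ht))]
  have hI_lim : Tendsto I atTop (𝓝 0) :=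
    tendsto_zero_of_nonneg_of_hasDerivAt_le (sub_pos.2 hs_lt) (hpos.mono hI_nonneg)
      (hpos.mono hI) (hIS_le.mono fun t h => by linarith)
  have hIS_lim : Tendsto (fun t => β * I t * S t) atTop (𝓝 0) := by
    refine tendsto_of_tendsto_of_tendsto_of_le_of_le' tendsto_const_nhds
      (by simpa using hI_lim.const_mul (β * s)) ?_ hIS_le
    filter_upwards [hpos] with t ht using by positivity [hI_nonneg t ht, hS_nonneg t ht]
  have hS_lim := tendsto_of_hasDerivAt_sub_mul (g := fun t => B * (1 - P) - β * I t * S t) hμ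
    (hpos.mono fun t ht => (hS t ht).congr_deriv (by ring))
    (by simpa using hIS_lim.const_sub (B * (1 - P)))
  have hR_lim := tendsto_of_hasDerivAt_sub_mul hμ (hpos.mono hR)
    (by simpa using hI_lim.const_mul γ)
  have hA_lim := tendsto_of_hasDerivAt_sub_mul hμ (hpos.mono hA) tendsto_const_nhds
  rw [zero_div] at hR_lim
  exact hS_lim.prodMk_nhds (hI_lim.prodMk_nhds (hR_lim.prodMk_nhds hA_lim))

/-- In the SIR model with newborn vaccination (fraction P ∈ (0,1),
lifelong immunity), if B(1-P) < μH with H = (γ+μ)/β, then the solution converges to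
(B(1-P)/μ, 0, 0, BP/μ). -/
theorem sir_newborn_vaccination_convergence
    (β γ μ B P : ℝ) (hβ : 0 < β) (hγ : 0 < γ) (hμ : 0 < μ) (hB : 0 ≤ B)
    (hP0 : 0 < P) (hP1 : P < 1)
    (hB_small : B * (1 - P) < μ * ((γ + μ) / β))
    (S I R A : ℝ → ℝ)
    (hS_nonneg : ∀ t ≥ (0:ℝ), 0 ≤ S t)
    (hI_nonneg : ∀ t ≥ (0:ℝ), 0 ≤ I t)
    (hR_nonneg : ∀ t ≥ (0:ℝ), 0 ≤ R t)
    (hA_nonneg : ∀ t ≥ (0:ℝ), 0 ≤ A t)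
    (hS : ∀ t ≥ (0:ℝ),
      HasDerivAt S (B * (1 - P) - μ * S t - β * I t * S t) t)
    (hI : ∀ t ≥ (0:ℝ), HasDerivAt I (β * I t * S t - γ * I t - μ * I t) t)
    (hR : ∀ t ≥ (0:ℝ), HasDerivAt R (γ * I t - μ * R t) t)
    (hA : ∀ t ≥ (0:ℝ), HasDerivAt A (B * P - μ * A t) t) :
    Filter.Tendsto (fun t => (S t, I t, R t, A t)) Filter.atTop
      (nhds (B * (1 - P) / μ, 0, 0, B * P / μ)) :=
  sir_newborn_vaccination_convergence_general β γ μ B P hβ hγ hμ hB_small S I R A hS_nonneg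
    hI_nonneg hS hI hR hA
end

section
/- Let β, γ, μ > 0, ρ ≥ 0, set H := (γ+μ)/β, and let B ≥ 0 be a constant with B < (ρ+μ)H. Let S, I, R, A : [0,∞) → [0,∞) be differentiable nonnegative functions satisfying the SIR model with susceptible vaccination: S' = B − ρS − μS − βIS, I' = βIS − γI − μI, R' = γI − μR, A' = ρS − μA for all t ≥ 0. Then lim_{t→∞} I(t) = 0, lim_{t→∞} R(t) = 0, lim_{t→∞} S(t) = B/(ρ+μ), and lim_{t→∞} A(t) = ρB/(μ(ρ+μ)). -/
/-!
Multiplying by the integrating factor `exp (k t)` shows that a solution of `f' ≤ c - k f` is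
eventually below any level above `c / k`. Dropping the infection term gives
`S' ≤ B - (ρ + μ) S`, so `S` eventually stays below a level `b < (γ + μ) / β`; then
`I' ≤ -(γ + μ - β b) I`, and `I → 0`. Each of `S`, `R`, `A` now solves a stable linear
equation `f' = g - k f` whose forcing term `g` converges, so `f → lim g / k`.
-/

open Filter Topology Real Set

section LinearComparison

variable {f f' g : ℝ → ℝ} {k c T L : ℝ}

lemma antitoneOn_mul_exp_of_hasDerivAt_le_sub_mul (hk : 0 ≤ k)
    (hf : ∀ t ∈ Ici T, HasDerivAt f (f' t) t) (hle : ∀ t ∈ Ici T, f' t ≤ c - k * f t) :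
    AntitoneOn (fun t => (k * f t - c) * exp (k * t)) (Ici T) := by
  have hderiv : ∀ t ∈ Ici T, HasDerivAt (fun t => (k * f t - c) * exp (k * t))
      (k * (f' t + k * f t - c) * exp (k * t)) t := fun t ht =>
    (((hf t ht).const_mul k).sub_const c).fun_mul ((hasDerivAt_id' t).const_mul k).exp
      |>.congr_deriv (by ring)
  refine antitoneOn_of_hasDerivWithinAt_nonpos (convex_Ici T)
    (fun t ht => (hderiv t ht).continuousAt.continuousWithinAt)
    (fun t ht => (hderiv t (interior_subset ht)).hasDerivWithinAt) fun t ht => ?_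
  have hslope : f' t + k * f t - c ≤ 0 := by linarith [hle t (interior_subset ht)]
  exact mul_nonpos_of_nonpos_of_nonneg (mul_nonpos_of_nonneg_of_nonpos hk hslope) (exp_pos _).le

lemma eventually_lt_of_hasDerivAt_le_sub_mul (hk : 0 < k)
    (hf : ∀ᶠ t in atTop, HasDerivAt f (f' t) t) (hle : ∀ᶠ t in atTop, f' t ≤ c - k * f t)
    {b : ℝ} (hb : c / k < b) : ∀ᶠ t in atTop, f t < b := by
  obtain ⟨T, hT⟩ := eventually_atTop.1 (hf.and hle)
  have hanti := antitoneOn_mul_exp_of_hasDerivAt_le_sub_mul hk.le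
    (fun t ht => (hT t ht).1) (fun t ht => (hT t ht).2)
  set C := (k * f T - c) * exp (k * T)
  have hdecay : Tendsto (fun t => C * exp (-(k * t))) atTop (𝓝 0) := by
    simpa using (tendsto_exp_neg_atTop_nhds_zero.comp (tendsto_id.const_mul_atTop hk)).const_mul C
  have hgap : 0 < k * b - c := by rw [div_lt_iff₀ hk] at hb; linarith
  filter_upwards [hdecay.eventually (gt_mem_nhds hgap), eventually_ge_atTop T] with t hsmall ht
  have hbound : k * f t - c ≤ C * exp (-(k * t)) := by
    rw [exp_neg, ← div_eq_mul_inv, le_div_iff₀ (exp_pos _)]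
    exact hanti self_mem_Ici ht ht
  nlinarith

lemma tendsto_zero_of_hasDerivAt_le_neg_mul (hk : 0 < k)
    (hf : ∀ᶠ t in atTop, HasDerivAt f (f' t) t) (hle : ∀ᶠ t in atTop, f' t ≤ -k * f t)
    (hnonneg : ∀ᶠ t in atTop, 0 ≤ f t) : Tendsto f atTop (𝓝 0) := by
  refine tendsto_order.2 ⟨fun a ha => hnonneg.mono fun t ht => ha.trans_le ht, fun b hb => ?_⟩
  exact eventually_lt_of_hasDerivAt_le_sub_mul (c := 0) hk hf (hle.mono fun t ht => by linarith)
    (by rwa [zero_div])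

lemma eventually_lt_of_hasDerivAt_sub_mul (hk : 0 < k)
    (hf : ∀ᶠ t in atTop, HasDerivAt f (g t - k * f t) t) (hg : Tendsto g atTop (𝓝 L))
    {b : ℝ} (hb : L / k < b) : ∀ᶠ t in atTop, f t < b := by
  obtain ⟨c, hLc, hcb⟩ := exists_between ((div_lt_iff₀ hk).1 hb)
  refine eventually_lt_of_hasDerivAt_le_sub_mul hk hf ?_ ((div_lt_iff₀ hk).2 hcb)
  filter_upwards [hg.eventually (gt_mem_nhds hLc)] with t ht
  linarith

theorem tendsto_div_of_hasDerivAt_sub_mul (hk : 0 < k)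
    (hf : ∀ᶠ t in atTop, HasDerivAt f (g t - k * f t) t) (hg : Tendsto g atTop (𝓝 L)) :
    Tendsto f atTop (𝓝 (L / k)) := by
  refine tendsto_order.2
    ⟨fun a ha => ?_, fun b hb => eventually_lt_of_hasDerivAt_sub_mul hk hf hg hb⟩
  have hneg : ∀ᶠ t in atTop, HasDerivAt (-f) ((-g) t - k * (-f) t) t :=
    hf.mono fun t ht => ht.neg.congr_deriv (by simp only [Pi.neg_apply]; ring)
  filter_upwards [eventually_lt_of_hasDerivAt_sub_mul hk hneg hg.neg (b := -a)
    (by rw [neg_div]; linarith)] with t ht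
  simp only [Pi.neg_apply] at ht
  linarith

end LinearComparison

theorem sir_susceptible_vaccination_convergence_general
    (β γ μ ρ B : ℝ) (hβ : 0 < β) (hμ : 0 < μ) (hρ : 0 ≤ ρ)
    (hB_small : B < (ρ + μ) * ((γ + μ) / β))
    (S I R A : ℝ → ℝ)
    (hS_nonneg : ∀ t ≥ (0:ℝ), 0 ≤ S t)
    (hI_nonneg : ∀ t ≥ (0:ℝ), 0 ≤ I t)
    (hS : ∀ t ≥ (0:ℝ),
      HasDerivAt S (B - ρ * S t - μ * S t - β * I t * S t) t)
    (hI : ∀ t ≥ (0:ℝ), HasDerivAt I (β * I t * S t - γ * I t - μ * I t) t)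
    (hR : ∀ t ≥ (0:ℝ), HasDerivAt R (γ * I t - μ * R t) t)
    (hA : ∀ t ≥ (0:ℝ), HasDerivAt A (ρ * S t - μ * A t) t) :
    Filter.Tendsto I Filter.atTop (nhds 0) ∧
    Filter.Tendsto R Filter.atTop (nhds 0) ∧
    Filter.Tendsto S Filter.atTop (nhds (B / (ρ + μ))) ∧
    Filter.Tendsto A Filter.atTop (nhds (ρ * B / (μ * (ρ + μ)))) := by
  have hk : 0 < ρ + μ := by linarith
  have hpos : ∀ᶠ t in atTop, 0 ≤ S t ∧ 0 ≤ I t :=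
    (eventually_ge_atTop 0).mono fun t ht => ⟨hS_nonneg t ht, hI_nonneg t ht⟩
  have hS_lt : ∀ b > B / (ρ + μ), ∀ᶠ t in atTop, S t < b := fun b hb =>
    eventually_lt_of_hasDerivAt_le_sub_mul hk ((eventually_ge_atTop 0).mono hS)
      (hpos.mono fun t ⟨hSt, hIt⟩ => by linarith [mul_nonneg (mul_nonneg hβ.le hIt) hSt]) hb
  obtain ⟨b, hBb, hbH⟩ := exists_between ((div_lt_iff₀' hk).2 hB_small)
  have hI_lim : Tendsto I atTop (𝓝 0) := by
    refine tendsto_zero_of_hasDerivAt_le_neg_mul (k := γ + μ - β * b) ?_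
      ((eventually_ge_atTop 0).mono hI) ?_ (hpos.mono fun _ h => h.2)
    · rwa [sub_pos, ← lt_div_iff₀' hβ]
    · filter_upwards [hS_lt b hBb, hpos] with t hSt ⟨_, hIt⟩
      nlinarith [mul_le_mul_of_nonneg_left hSt.le (mul_nonneg hβ.le hIt)]
  have hS_lim : Tendsto S atTop (𝓝 (B / (ρ + μ))) := by
    have hIS : Tendsto (fun t => I t * S t) atTop (𝓝 0) :=
      hI_lim.zero_mul_isBoundedUnder_le <| isBoundedUnder_of_eventually_le (a := b) <| by
        filter_upwards [hS_lt b hBb, hpos] with t hSt ⟨hS0, _⟩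
        simpa [abs_of_nonneg hS0] using hSt.le
    refine tendsto_div_of_hasDerivAt_sub_mul hk (g := fun t => B - β * (I t * S t)) ?_ ?_
    · filter_upwards [eventually_ge_atTop 0] with t ht
      exact (hS t ht).congr_deriv (by ring)
    · simpa using (hIS.const_mul β).const_sub B
  have hR_lim : Tendsto R atTop (𝓝 0) := by
    simpa using tendsto_div_of_hasDerivAt_sub_mul hμ (g := fun t => γ * I t)
      ((eventually_ge_atTop 0).mono hR) (hI_lim.const_mul γ)
  have hA_lim := tendsto_div_of_hasDerivAt_sub_mul hμ (g := fun t => ρ * S t)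
    ((eventually_ge_atTop 0).mono hA) (hS_lim.const_mul ρ)
  refine ⟨hI_lim, hR_lim, hS_lim, ?_⟩
  convert hA_lim using 2
  field_simp

/-- In the SIR model with vaccination of susceptibles at rate ρ ≥ 0, if
B < (ρ+μ)H with H = (γ+μ)/β, then the disease is eradicated and S, A converge to their
steady-state values. -/
theorem sir_susceptible_vaccination_convergence
    (β γ μ ρ B : ℝ) (hβ : 0 < β) (hγ : 0 < γ) (hμ : 0 < μ) (hρ : 0 ≤ ρ)
    (hB : 0 ≤ B) (hB_small : B < (ρ + μ) * ((γ + μ) / β))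
    (S I R A : ℝ → ℝ)
    (hS_nonneg : ∀ t ≥ (0:ℝ), 0 ≤ S t)
    (hI_nonneg : ∀ t ≥ (0:ℝ), 0 ≤ I t)
    (hR_nonneg : ∀ t ≥ (0:ℝ), 0 ≤ R t)
    (hA_nonneg : ∀ t ≥ (0:ℝ), 0 ≤ A t)
    (hS : ∀ t ≥ (0:ℝ),
      HasDerivAt S (B - ρ * S t - μ * S t - β * I t * S t) t)
    (hI : ∀ t ≥ (0:ℝ), HasDerivAt I (β * I t * S t - γ * I t - μ * I t) t)
    (hR : ∀ t ≥ (0:ℝ), HasDerivAt R (γ * I t - μ * R t) t)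
    (hA : ∀ t ≥ (0:ℝ), HasDerivAt A (ρ * S t - μ * A t) t) :
    Filter.Tendsto I Filter.atTop (nhds 0) ∧
    Filter.Tendsto R Filter.atTop (nhds 0) ∧
    Filter.Tendsto S Filter.atTop (nhds (B / (ρ + μ))) ∧
    Filter.Tendsto A Filter.atTop (nhds (ρ * B / (μ * (ρ + μ)))) :=
  sir_susceptible_vaccination_convergence_general β γ μ ρ B hβ hμ hρ hB_small S I R A hS_nonneg
    hI_nonneg hS hI hR hA
end
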